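/- arXiv:2105.06287 — 2 statements merged into one kernel-verified Lean document; each statement's English description precedes it below -/
import Mathlib

section
/- For every k ∈ M, k = max T(k); that is, k is the largest index among the nodes of T(k). -/
open scoped Classical
open Finset MeasureTheory

namespace BSHM

noncomputable section

/-- The set of candidate parents of machine type `i`: types `j ∈ M` with `j > i`
and a strictly smaller normalized cost rate per capacity unit. -/
def pset (m : ℕ) (g r : ℕ → ℝ) (i : ℕ) : Set ℕ :=
  {j | j ≤ m ∧ i < j ∧ r j / g j < r i / g i}

/-- The parent `p i` of machine type `i` (equal to `0` when the parent is undefined,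
since any actual parent has index `≥ 2`). -/
def p (m : ℕ) (g r : ℕ → ℝ) (i : ℕ) : ℕ := sInf (pset m g r i)

/-- `pdef i` asserts that the parent of `i` is defined. -/
def pdef (m : ℕ) (g r : ℕ → ℝ) (i : ℕ) : Prop := (pset m g r i).Nonempty

/-- One step of the parent relation: `b` is the (defined) parent of `a`. -/
def pstep (m : ℕ) (g r : ℕ → ℝ) (a b : ℕ) : Prop :=
  pdef m g r a ∧ b = p m g r a

/-- `P i`: the set consisting of `i` together with all of its iterated parents. -/
def P (m : ℕ) (g r : ℕ → ℝ) (i : ℕ) : Set ℕ :=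
  {z | Relation.ReflTransGen (pstep m g r) i z}

/-- `A i`: the set of nodes in the tree rooted at `i`,
i.e. all `z ∈ M` having `i` as an ancestor (or equal to `i`). -/
def A (m : ℕ) (g r : ℕ → ℝ) (i : ℕ) : Set ℕ :=
  {z | 1 ≤ z ∧ z ≤ m ∧ i ∈ P m g r z}

/-- `v i`: the lowest-indexed node in the tree rooted at `i`. -/
def v (m : ℕ) (g r : ℕ → ℝ) (i : ℕ) : ℕ := sInf (A m g r i)

/-- `y i`: the younger siblings of `i` (same parent status, smaller index). -/
def y (m : ℕ) (g r : ℕ → ℝ) (i : ℕ) : Set ℕ :=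
  {z | 1 ≤ z ∧ z ≤ m ∧ z < i ∧ p m g r z = p m g r i}

/-- `esib i`: the elder siblings of `i`. -/
def esib (m : ℕ) (g r : ℕ → ℝ) (i : ℕ) : Set ℕ :=
  {z | 1 ≤ z ∧ z ≤ m ∧ i < z ∧ p m g r z = p m g r i}

/-- `T k := {k} ∪ ⋃_{z ∈ P(k)} y(z)`. -/
def T (m : ℕ) (g r : ℕ → ℝ) (k : ℕ) : Set ℕ :=
  {k} ∪ ⋃ z ∈ P m g r k, y m g r z

/-- `T k` as a `Finset` (all relevant nodes lie in `{k} ∪ [1, m]`). -/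
def TIcc (m : ℕ) (g r : ℕ → ℝ) (k : ℕ) : Finset ℕ :=
  (insert k (Finset.Icc 1 m)).filter (fun z => z ∈ T m g r k)

end

end BSHM

/-!
Along the ancestor chain of `k`, each parent `p w` is the first index after `w` whose ratio
`r / g` drops below that of `w`; hence every index strictly between `k` and an ancestor `z`
has a larger ratio than `z`. So a younger sibling `x` of `z` with `x > k` would have `z` as a
candidate parent, forcing `p x ≤ z < p z` (or `p z = 0 < p x`), contradicting `p x = p z`.
-/

namespace BSHM

section

variable {m : ℕ} {g r : ℕ → ℝ}

lemma p_mem_pset {i : ℕ} (h : pdef m g r i) : p m g r i ∈ pset m g r i :=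
  Nat.sInf_mem h

lemma lt_p {i : ℕ} (h : pdef m g r i) : i < p m g r i :=
  (p_mem_pset h).2.1

lemma p_le_of_mem_pset {i j : ℕ} (h : j ∈ pset m g r i) : p m g r i ≤ j :=
  Nat.sInf_le h

lemma p_eq_zero_of_not_pdef {i : ℕ} (h : ¬ pdef m g r i) : p m g r i = 0 := by
  rw [p, Set.not_nonempty_iff_eq_empty.mp h, Nat.sInf_empty]

lemma p_ne_p_of_mem_pset {x z : ℕ} (h : z ∈ pset m g r x) : p m g r x ≠ p m g r z := by
  have hpx : x < p m g r x := lt_p ⟨z, h⟩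
  have hpxz : p m g r x ≤ z := p_le_of_mem_pset h
  by_cases hz : pdef m g r z
  · exact (hpxz.trans_lt (lt_p hz)).ne
  · rw [p_eq_zero_of_not_pdef hz]
    omega

lemma ratio_le_of_lt_of_lt_p {w x : ℕ} (hx : x ≤ m) (hwx : w < x) (hxp : x < p m g r w) :
    r w / g w ≤ r x / g x :=
  not_lt.mp fun hlt => (p_le_of_mem_pset ⟨hx, hwx, hlt⟩).not_gt hxp

lemma le_of_mem_P {k z : ℕ} (hk : k ≤ m) (hz : z ∈ P m g r k) : z ≤ m := by
  induction hz with
  | refl => exact hk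
  | tail _ hstep => exact hstep.2 ▸ (p_mem_pset hstep.1).1

lemma ratio_lt_of_mem_P {k z : ℕ} (hz : z ∈ P m g r k) {x : ℕ} (hkx : k < x) (hxz : x < z) :
    r z / g z < r x / g x := by
  induction hz generalizing x with
  | refl => omega
  | @tail w z _ hstep ih =>
    obtain ⟨hdef, rfl⟩ := hstep
    have hmem := p_mem_pset hdef
    rcases lt_trichotomy x w with hxw | rfl | hwx
    · exact hmem.2.2.trans (ih hkx hxw)
    · exact hmem.2.2
    · exact hmem.2.2.trans_le
        (ratio_le_of_lt_of_lt_p (hxz.le.trans hmem.1) hwx hxz)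

lemma le_of_mem_y_of_mem_P {k z x : ℕ} (hk : k ≤ m) (hz : z ∈ P m g r k)
    (hx : x ∈ y m g r z) : x ≤ k := by
  obtain ⟨-, -, hxz, hpx⟩ := hx
  by_contra! hkx
  exact p_ne_p_of_mem_pset ⟨le_of_mem_P hk hz, hxz, ratio_lt_of_mem_P hz hkx hxz⟩ hpx

end

theorem statement_5_general (m : ℕ) (g r : ℕ → ℝ) :
    ∀ k, 1 ≤ k → k ≤ m → IsGreatest (T m g r k) k := by
  intro k _ hkm
  refine ⟨Or.inl rfl, ?_⟩
  rintro x (rfl | hx)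
  · exact le_rfl
  · obtain ⟨z, hz, hxz⟩ := Set.mem_iUnion₂.mp hx
    exact le_of_mem_y_of_mem_P hkm hz hxz

/-- For every `k ∈ M`, `k = max T(k)`: `k` is the largest index
among the nodes of `T(k)`. -/
theorem statement_5 (m : ℕ) (g r : ℕ → ℝ)
    (hm : 1 ≤ m)
    (hg1 : 0 < g 1) (hr1 : 0 < r 1)
    (hg : ∀ i j, 1 ≤ i → i < j → j ≤ m → g i < g j)
    (hr : ∀ i j, 1 ≤ i → i < j → j ≤ m → r i < r j) :
    ∀ k, 1 ≤ k → k ≤ m → IsGreatest (T m g r k) k :=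
  statement_5_general m g r

end BSHM
end

section
/- There exists a feasible machine configuration w* of minimum cost satisfying all of the following: (1) k_opt := max{z ∈ M : w*(z) > 0} ∈ P(k0); (2) for every z0 ∈ M, ∑_{z ∈ A_{z0}\{z0}} w*(z)·r(z) < r(z0); (3) ⌊S(H_{k_opt})/g(k_opt)⌋ ≤ w*(k_opt) ≤ ⌈S(H_{k_opt})/g(k_opt)⌉. -/
open scoped Classical
open Finset MeasureTheory

namespace BSHM

noncomputable section

/-! ### Jobs and one-shot scheduling -/

variable {ι : Type*}

/-- The exact machine type of a job `J`: the least `z ∈ M` with `s J ≤ g z`. -/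
def mty (m : ℕ) (g : ℕ → ℝ) (s : ι → ℝ) (J : ι) : ℕ :=
  sInf {z | 1 ≤ z ∧ z ≤ m ∧ s J ≤ g z}

/-- Total size of a finite set of jobs. -/
def Ssum (s : ι → ℝ) (W : Finset ι) : ℝ := ∑ J ∈ W, s J

/-- `k0f X`: the highest-indexed exact machine type among the jobs of `X`. -/
def k0f (m : ℕ) (g : ℕ → ℝ) (s : ι → ℝ) (X : Finset ι) : ℕ :=
  X.sup (fun J => mty m g s J)

/-- `H z X`: the jobs of `X` whose exact machine type lies in the tree rooted at `z`. -/
def H (m : ℕ) (g r : ℕ → ℝ) (s : ι → ℝ) (z : ℕ) (X : Finset ι) : Finset ι :=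
  X.filter (fun J => mty m g s J ∈ A m g r z)

/-- `SH X z := S(H_z(X))`. -/
def SH (m : ℕ) (g r : ℕ → ℝ) (s : ι → ℝ) (X : Finset ι) (z : ℕ) : ℝ :=
  Ssum s (H m g r s z X)

/-- Feasibility of a machine configuration `w : M → ℕ` for the job set `X`. -/
def Feasible (m : ℕ) (g : ℕ → ℝ) (s : ι → ℝ) (X : Finset ι) (w : ℕ → ℕ) : Prop :=
  ∀ i, 1 ≤ i → i ≤ m →
    Ssum s (X.filter (fun J => i ≤ mty m g s J)) ≤ ∑ z ∈ Finset.Icc i m, (w z : ℝ) * g z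

/-- The cost of a machine configuration. -/
def cost (m : ℕ) (r : ℕ → ℝ) (w : ℕ → ℕ) : ℝ :=
  ∑ z ∈ Finset.Icc 1 m, (w z : ℝ) * r z

/-- The optimal one-shot scheduling cost for a job set `X`. -/
def OPT1 (m : ℕ) (g r : ℕ → ℝ) (s : ι → ℝ) (X : Finset ι) : ℝ :=
  sInf {c : ℝ | ∃ w : ℕ → ℕ, Feasible m g s X w ∧ c = cost m r w}

/-- The fractional machine configuration `cn_{z*}` for the job set `X`, with
highest-indexed machine type `zs`.  A node `i ∈ T(zs) \ {zs}` is the boundary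
type `i*` exactly when `∑_{z ∈ T(zs), z > i} S(H_z) ≤ cn(zs)·g(zs) <
∑_{z ∈ T(zs), z ≥ i} S(H_z)`; nodes above the boundary get `0`,
nodes below it get `S(H_i)/g_i`. -/
def cn (m : ℕ) (g r : ℕ → ℝ) (s : ι → ℝ) (X : Finset ι) (zs i : ℕ) : ℝ :=
  let B : ℝ := (⌈SH m g r s X zs / g zs⌉₊ : ℝ) * g zs
  let Sge : ℝ := ∑ z ∈ (TIcc m g r zs).filter (fun z => i ≤ z), SH m g r s X z
  let Sgt : ℝ := ∑ z ∈ (TIcc m g r zs).filter (fun z => i < z), SH m g r s X z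
  if i = zs then (⌈SH m g r s X zs / g zs⌉₊ : ℝ)
  else if i ∈ T m g r zs then
    (if Sgt ≤ B ∧ B < Sge then (Sge - B) / g i
     else if B < Sgt then SH m g r s X i / g i
     else 0)
  else 0

/-- `cn_{zs}` is decent: for every strict ancestor `zt` of `zs`, the total cost of
the machines of types in `T(zs) ∩ A(zt)` is at most the cost of one type-`zt` machine. -/
def decent (m : ℕ) (g r : ℕ → ℝ) (s : ι → ℝ) (X : Finset ι) (zs : ℕ) : Prop :=
  ∀ zt ∈ P m g r zs, zt ≠ zs →
    (∑ z ∈ (TIcc m g r zs).filter (fun z => z ∈ A m g r zt), cn m g r s X zs z * r z) ≤ r zt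

/-- `z⋄(X)`: the least `z* ∈ P(k0(X))` such that `cn_{z*}` is decent. -/
def zdia (m : ℕ) (g r : ℕ → ℝ) (s : ι → ℝ) (X : Finset ι) : ℕ :=
  sInf {zs | zs ∈ P m g r (k0f m g s X) ∧ decent m g r s X zs}

/-- The child of `zd` whose subtree contains node `k`. -/
def chil (m : ℕ) (g r : ℕ → ℝ) (zd k : ℕ) : ℕ :=
  sInf {i | p m g r i = zd ∧ k ∈ A m g r i}

/-- The node `i ∈ T(zd)` whose subtree contains node `k`. -/
def idxT (m : ℕ) (g r : ℕ → ℝ) (zd k : ℕ) : ℕ :=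
  sInf {i | i ∈ T m g r zd ∧ k ∈ A m g r i}

/-- The children `f(zd)` of node `zd`, as a `Finset`. -/
def fchFin (m : ℕ) (g r : ℕ → ℝ) (zd : ℕ) : Finset ℕ :=
  (Finset.Icc 1 m).filter (fun z => p m g r z = zd)

/-- The cost `r̃(X)(J)` charged to the job `J` of the job set `X`. -/
def charge (m : ℕ) (g r : ℕ → ℝ) (s : ι → ℝ) (X : Finset ι) (J : ι) : ℝ :=
  let zd := zdia m g r s X
  let ρ : ℕ → ℝ := fun i => r i / g i
  let Hh := X.filter (fun J' => mty m g s J' = zd)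
  let c : ℝ := Ssum s Hh * ρ zd + ∑ i ∈ fchFin m g r zd, SH m g r s X i * ρ i
  if mty m g s J ∈ A m g r zd then
    if g zd ≤ SH m g r s X zd then s J * ρ zd
    else if r zd < c then
      if mty m g s J = zd then s J * ρ zd
      else
        s J * (ρ (chil m g r zd (mty m g s J)) -
          (ρ (chil m g r zd (mty m g s J)) - ρ zd) *
            ((c - r zd) /
              (∑ i ∈ fchFin m g r zd, ∑ J' ∈ H m g r s i X, s J' * (ρ i - ρ zd))))
    else
      if mty m g s J = zd then s J * ρ zd * (1 + (r zd - c) / (Ssum s Hh * ρ zd))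
      else s J * ρ (chil m g r zd (mty m g s J))
  else s J * ρ (idxT m g r zd (mty m g s J))

end

end BSHM

/-!
Costs are natural multiples of `r 1`, so a configuration can be chosen by minimising in stages:
first the cost, then the number of machines, then the potential `∑ z * w z * r z`. Fewest
machines forces cheap subtrees, since machines below `z0` costing at least `r z0` could be
consolidated into one machine of type `z0`. Minimal potential forces `ktop ∈ P(k0)` and the
upper bound on `w ktop`: otherwise machines of type `ktop` could move down, at the same cost,
to a type with no worse cost per capacity. The lower bound follows from cheap subtrees: all
jobs lie in the subtree `[v ktop, ktop]`, so too few machines of type `ktop` would leave its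
lower types with the capacity, hence the cost, of a whole machine of type `ktop`.
-/

namespace BSHM

section ParentTree

variable {m : ℕ} {g r : ℕ → ℝ}

lemma pstep_mem_pset {a b : ℕ} (h : pstep m g r a b) : b ∈ pset m g r a := by
  obtain ⟨hd, rfl⟩ := h
  exact Nat.sInf_mem hd

lemma le_of_mem_P_s7 {a b : ℕ} (h : b ∈ P m g r a) : a ≤ b := by
  induction h with
  | refl => exact le_rfl
  | tail _ hbc ih => exact ih.trans (pstep_mem_pset hbc).2.1.le

lemma ratio_le_of_mem_P {a b : ℕ} (h : b ∈ P m g r a) : r b / g b ≤ r a / g a := by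
  induction h with
  | refl => exact le_rfl
  | tail _ hbc ih => exact (pstep_mem_pset hbc).2.2.le.trans ih

lemma ratio_lt_of_mem_P_s7 {a b : ℕ} (h : b ∈ P m g r a) (hne : a ≠ b) :
    r b / g b < r a / g a := by
  induction h with
  | refl => exact absurd rfl hne
  | tail hab hbc _ => exact (pstep_mem_pset hbc).2.2.trans_le (ratio_le_of_mem_P hab)

/-- A type strictly between `a` and `p a` has ratio at least that of `a`, so `p a` is one of its
candidate parents; iterating, it reaches `p a`. -/
lemma parent_mem_P_of_lt_of_le {a t : ℕ} (ha : pdef m g r a) (hat : a < t)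
    (htp : t ≤ p m g r a) : p m g r a ∈ P m g r t := by
  induction h : p m g r a - t using Nat.strong_induction_on generalizing t with
  | _ d ih =>
    rcases htp.eq_or_lt with rfl | htp
    · exact Relation.ReflTransGen.refl
    have hpa := pstep_mem_pset (m := m) (g := g) (r := r) ⟨ha, rfl⟩
    have ht : t ∉ pset m g r a := fun ht => (Nat.sInf_le ht).not_gt htp
    have hpt : p m g r a ∈ pset m g r t :=
      ⟨hpa.1, htp, hpa.2.2.trans_le (not_lt.mp fun h => ht ⟨htp.le.trans hpa.1, hat, h⟩)⟩
    have hstep : pstep m g r t (p m g r t) := ⟨⟨_, hpt⟩, rfl⟩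
    have htt := (pstep_mem_pset hstep).2.1
    exact Relation.ReflTransGen.head hstep
      (ih _ (by omega) (hat.trans htt) (Nat.sInf_le hpt) rfl)

lemma mem_P_of_le_of_le {x y z : ℕ} (h : y ∈ P m g r x) (hxz : x ≤ z) (hzy : z ≤ y) :
    y ∈ P m g r z := by
  induction h using Relation.ReflTransGen.head_induction_on generalizing z with
  | refl => exact le_antisymm hzy hxz ▸ Relation.ReflTransGen.refl
  | head hac hcy ih =>
    rename_i a c
    rcases le_or_gt c z with hcz | hzc
    · exact ih hcz hzy
    rcases hxz.eq_or_lt with rfl | haz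
    · exact Relation.ReflTransGen.head hac hcy
    obtain ⟨hd, rfl⟩ := hac
    exact (parent_mem_P_of_lt_of_le hd haz hzc.le).trans hcy

lemma v_mem_A {k : ℕ} (hk1 : 1 ≤ k) (hkm : k ≤ m) : v m g r k ∈ A m g r k :=
  Nat.sInf_mem ⟨k, hk1, hkm, Relation.ReflTransGen.refl⟩

lemma mem_A_iff {k : ℕ} (hk1 : 1 ≤ k) (hkm : k ≤ m) {z : ℕ} :
    z ∈ A m g r k ↔ v m g r k ≤ z ∧ z ≤ k := by
  have hv := v_mem_A (g := g) (r := r) hk1 hkm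
  refine ⟨fun hz => ⟨Nat.sInf_le hz, le_of_mem_P_s7 hz.2.2⟩, fun ⟨h1, h2⟩ => ?_⟩
  exact ⟨hv.1.trans h1, h2.trans hkm, mem_P_of_le_of_le hv.2.2 h1 h2⟩

lemma ratio_le_of_parent_gt {a k : ℕ} (hak : a < k) (hkm : k ≤ m)
    (hpar : ∀ b, pstep m g r a b → k < b) : r a / g a ≤ r k / g k := by
  by_contra! hlt
  have hk : k ∈ pset m g r a := ⟨hkm, hak, hlt⟩
  exact (Nat.sInf_le hk).not_gt (hpar _ ⟨⟨k, hk⟩, rfl⟩)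

lemma mem_A_of_parent_gt {a k z0 : ℕ} (ha : a ∈ A m g r z0) (ha0 : a ≠ z0) (hak : a < k)
    (hkm : k ≤ m) (hpar : ∀ b, pstep m g r a b → k < b) : k ∈ A m g r z0 ∧ k ≠ z0 := by
  obtain hrefl | ⟨b, hab, hbz⟩ := Relation.ReflTransGen.cases_head ha.2.2
  · exact absurd hrefl ha0
  have hkb := hpar b hab
  have hkP : b ∈ P m g r k := mem_P_of_le_of_le (Relation.ReflTransGen.single hab) hak.le hkb.le
  refine ⟨⟨ha.1.trans hak.le, hkm, hkP.trans hbz⟩, ?_⟩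
  rintro rfl
  exact (le_of_mem_P_s7 hbz).not_gt hkb

end ParentTree

/-- Greedy subset sum: take as many of the most valuable items as possible, then recurse. -/
lemma exists_le_sum_mul_eq_of_dvd {α : Type*} [DecidableEq α] (F : Finset α) (x : α → ℕ)
    (hx : ∀ i ∈ F, ∀ j ∈ F, x i ≤ x j → x i ∣ x j) :
    ∀ (c : α → ℕ) (V : ℕ), (∀ i ∈ F, x i ∣ V) → V ≤ ∑ i ∈ F, c i * x i →
      ∃ u ≤ c, (∀ i ∉ F, u i = 0) ∧ ∑ i ∈ F, u i * x i = V := by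
  induction F using Finset.induction_on_max_value x with
  | empty =>
    intro c V _ hV
    exact ⟨0, fun _ => Nat.zero_le _, fun _ _ => rfl, by simp at hV; simp [hV]⟩
  | insert a F haF hmax ih =>
    intro c V hdvd hV
    rw [sum_insert haF] at hV
    obtain ⟨n, hn⟩ := hdvd a (mem_insert_self a F)
    by_cases hna : n ≤ c a
    · refine ⟨Pi.single a n, fun i => ?_, fun i hi => ?_, ?_⟩
      · by_cases hi : i = a
        · subst hi; simpa using hna
        · simp [hi]
      · simp [(ne_of_mem_of_not_mem (mem_insert_self a F) hi).symm]
      · rw [sum_insert haF, sum_eq_zero fun i hi => by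
          simp [ne_of_mem_of_not_mem hi haF]]
        simp [hn, mul_comm]
    have hca : c a * x a ≤ V := by rw [hn, mul_comm]; exact Nat.mul_le_mul_left _ (by omega)
    obtain ⟨u, hu, hu0, hsum⟩ := ih (fun i hi j hj => hx i (mem_insert_of_mem hi) j
        (mem_insert_of_mem hj)) c (V - c a * x a)
      (fun i hi => Nat.dvd_sub (hdvd i (mem_insert_of_mem hi))
        (Dvd.dvd.mul_left (hx i (mem_insert_of_mem hi) a (mem_insert_self a F)
          (hmax i hi)) _))
      (by omega)
    refine ⟨Function.update u a (c a), fun i => ?_, fun i hi => ?_, ?_⟩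
    · by_cases hi : i = a
      · subst hi; simp
      · simpa [hi] using hu i
    · rw [mem_insert, not_or] at hi
      rw [Function.update_of_ne hi.1]
      exact hu0 i hi.2
    · rw [sum_insert haF, Function.update_self,
        sum_congr rfl fun i hi => by rw [Function.update_of_ne (ne_of_mem_of_not_mem hi haF)],
        hsum]
      omega

lemma exists_nat_mul_of_zpow_le {b : ℕ} (hb : 1 < b) {α β : ℤ}
    (h : (b : ℝ) ^ α ≤ (b : ℝ) ^ β) : ∃ n : ℕ, (b : ℝ) ^ β = n * (b : ℝ) ^ α := by
  have hαβ : α ≤ β := (zpow_le_zpow_iff_right₀ (by exact_mod_cast hb)).mp h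
  refine ⟨b ^ (β - α).toNat, ?_⟩
  rw [Nat.cast_pow, ← zpow_natCast, Int.toNat_of_nonneg (by omega), ← zpow_add₀ (by positivity)]
  congr 1
  ring

structure MachineData (m : ℕ) (g r : ℕ → ℝ) : Prop where
  g_pos : ∀ z, 1 ≤ z → z ≤ m → 0 < g z
  r_pos : ∀ z, 1 ≤ z → z ≤ m → 0 < r z
  r_lt : ∀ i j, 1 ≤ i → i < j → j ≤ m → r i < r j
  r_dvd : ∀ i j, 1 ≤ i → i ≤ j → j ≤ m → ∃ n : ℕ, r j = n * r i

namespace MachineData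

variable {m : ℕ} {g r : ℕ → ℝ}

lemma of_pow_eight (hg1 : 0 < g 1) (hg : ∀ i j, 1 ≤ i → i < j → j ≤ m → g i < g j)
    (hr : ∀ i j, 1 ≤ i → i < j → j ≤ m → r i < r j)
    (hr8 : ∀ z, 1 ≤ z → z ≤ m → ∃ n : ℤ, r z = (8 : ℝ) ^ n) : MachineData m g r where
  g_pos z h1 hzm := h1.eq_or_lt.elim (fun h => h ▸ hg1) fun h => hg1.trans (hg 1 z le_rfl h hzm)
  r_pos z h1 hzm := by
    obtain ⟨n, hn⟩ := hr8 z h1 hzm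
    rw [hn]
    positivity
  r_lt := hr
  r_dvd i j hi hij hjm := by
    obtain ⟨α, hα⟩ := hr8 i hi (hij.trans hjm)
    obtain ⟨β, hβ⟩ := hr8 j (hi.trans hij) hjm
    have hle : r i ≤ r j := hij.eq_or_lt.elim (fun h => h ▸ le_rfl) fun h => (hr i j hi h hjm).le
    rw [hα, hβ] at hle ⊢
    exact_mod_cast exists_nat_mul_of_zpow_le (b := 8) (by norm_num) (by exact_mod_cast hle)

lemma two_mul_le (hM : MachineData m g r) {i j : ℕ} (hi : 1 ≤ i) (hij : i < j) (hjm : j ≤ m) :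
    2 * r i ≤ r j := by
  obtain ⟨n, hn⟩ := hM.r_dvd i j hi hij.le hjm
  have hlt := hM.r_lt i j hi hij hjm
  have hri := hM.r_pos i hi (hij.le.trans hjm)
  rw [hn] at hlt ⊢
  have : (1 : ℝ) < n := by nlinarith
  have : (2 : ℝ) ≤ n := by exact_mod_cast (show 1 < n by exact_mod_cast this)
  nlinarith

lemma exists_nat_rates (hM : MachineData m g r) :
    ∃ N : ℕ → ℕ, (∀ z, 1 ≤ z → z ≤ m → r z = N z * r 1) ∧
      ∀ i j, 1 ≤ i → i ≤ j → j ≤ m → N i ∣ N j := by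
  have h : ∀ z, ∃ N : ℕ, 1 ≤ z → z ≤ m → r z = N * r 1 := fun z => by
    by_cases hz : 1 ≤ z ∧ z ≤ m
    · obtain ⟨n, hn⟩ := hM.r_dvd 1 z le_rfl hz.1 hz.2
      exact ⟨n, fun _ _ => hn⟩
    · exact ⟨0, fun h1 h2 => absurd ⟨h1, h2⟩ hz⟩
  choose N hN using h
  refine ⟨N, hN, fun i j hi hij hjm => ?_⟩
  obtain ⟨n, hn⟩ := hM.r_dvd i j hi hij hjm
  have hr1 := hM.r_pos 1 le_rfl (hi.trans (hij.trans hjm))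
  rw [hN i hi (hij.trans hjm), hN j (hi.trans hij) hjm, ← mul_assoc] at hn
  exact ⟨n, by exact_mod_cast (mul_right_cancel₀ hr1.ne' hn).trans (mul_comm _ _)⟩

end MachineData

section Configurations

variable {m : ℕ} {g r : ℕ → ℝ}

lemma MachineData.exists_cost_eq_nat_mul (hM : MachineData m g r) (c : ℕ → ℕ) :
    ∃ n : ℕ, cost m r c = n * r 1 := by
  obtain ⟨N, hN, -⟩ := hM.exists_nat_rates
  refine ⟨∑ z ∈ Icc 1 m, c z * N z, ?_⟩
  rw [Nat.cast_sum, sum_mul]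
  refine sum_congr rfl fun z hz => ?_
  rw [mem_Icc] at hz
  rw [hN z hz.1 hz.2]
  push_cast
  ring

lemma MachineData.exists_le_sum_mul_eq (hM : MachineData m g r) {F : Finset ℕ} {z0 : ℕ}
    (hF : ∀ z ∈ F, 1 ≤ z ∧ z < z0) (hz01 : 1 ≤ z0) (hz0m : z0 ≤ m) (w : ℕ → ℕ)
    (hle : r z0 ≤ ∑ z ∈ F, (w z : ℝ) * r z) :
    ∃ u ≤ w, (∀ z ∉ F, u z = 0) ∧ ∑ z ∈ F, (u z : ℝ) * r z = r z0 := by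
  obtain ⟨N, hN, hNdvd⟩ := hM.exists_nat_rates
  have hr1 : 0 < r 1 := hM.r_pos 1 le_rfl (hz01.trans hz0m)
  have hsum : ∀ c : ℕ → ℕ, ∑ z ∈ F, (c z : ℝ) * r z = ((∑ z ∈ F, c z * N z : ℕ) : ℝ) * r 1 := by
    intro c
    rw [Nat.cast_sum, sum_mul]
    refine sum_congr rfl fun z hz => ?_
    rw [hN z (hF z hz).1 ((hF z hz).2.le.trans hz0m)]
    push_cast
    ring
  have hchain : ∀ i ∈ F, ∀ j ∈ F, N i ≤ N j → N i ∣ N j := by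
    intro i hi j hj hij
    refine hNdvd i j (hF i hi).1 (not_lt.mp fun hji => hij.not_gt ?_) ((hF j hj).2.le.trans hz0m)
    have hlt := hM.r_lt j i (hF j hj).1 hji ((hF i hi).2.le.trans hz0m)
    rw [hN j (hF j hj).1 (hji.le.trans ((hF i hi).2.le.trans hz0m)),
      hN i (hF i hi).1 ((hF i hi).2.le.trans hz0m)] at hlt
    exact_mod_cast lt_of_mul_lt_mul_right hlt hr1.le
  rw [hsum, hN z0 hz01 hz0m] at hle
  obtain ⟨u, hu, hu0, huN⟩ := exists_le_sum_mul_eq_of_dvd F N hchain w (N z0)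
    (fun z hz => hNdvd z z0 (hF z hz).1 (hF z hz).2.le hz0m)
    (by exact_mod_cast le_of_mul_le_mul_right hle hr1)
  exact ⟨u, hu, hu0, by rw [hsum, huN, hN z0 hz01 hz0m]⟩

lemma sum_update_mul (F : Finset ℕ) (w : ℕ → ℕ) (k x : ℕ) (h : ℕ → ℝ) :
    ∑ z ∈ F, (Function.update w k x z : ℝ) * h z
      = ∑ z ∈ F, (w z : ℝ) * h z + if k ∈ F then ((x : ℝ) - w k) * h k else 0 := by
  split_ifs with hk
  · rw [← add_sum_erase _ _ hk, ← add_sum_erase _ _ hk, Function.update_self,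
      sum_congr rfl fun z hz => by rw [Function.update_of_ne (ne_of_mem_erase hz)]]
    ring
  · rw [add_zero]
    exact sum_congr rfl fun z hz => by
      rw [Function.update_of_ne (ne_of_mem_of_not_mem hz hk)]

lemma sum_sub_mul (F : Finset ℕ) {w u : ℕ → ℕ} (hu : u ≤ w) (h : ℕ → ℝ) :
    ∑ z ∈ F, ((w - u) z : ℝ) * h z = ∑ z ∈ F, (w z : ℝ) * h z - ∑ z ∈ F, (u z : ℝ) * h z := by
  rw [← Finset.sum_sub_distrib]
  refine sum_congr rfl fun z _ => ?_
  rw [Pi.sub_apply, Nat.cast_sub (hu z)]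
  ring

def moveDown (w : ℕ → ℕ) (a k c n : ℕ) : ℕ → ℕ :=
  Function.update (Function.update w k (w k - c)) a (w a + c * n)

lemma sum_moveDown_mul (F : Finset ℕ) (w : ℕ → ℕ) {a k c : ℕ} (n : ℕ) (hak : a ≠ k)
    (hc : c ≤ w k) (h : ℕ → ℝ) :
    ∑ z ∈ F, (moveDown w a k c n z : ℝ) * h z
      = ∑ z ∈ F, (w z : ℝ) * h z + (if a ∈ F then (c * n : ℝ) * h a else 0)
        - if k ∈ F then (c : ℝ) * h k else 0 := by
  rw [moveDown, sum_update_mul, sum_update_mul, Function.update_of_ne hak]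
  push_cast [Nat.cast_sub hc]
  split_ifs <;> ring

end Configurations

noncomputable def strictSubtree (m : ℕ) (g r : ℕ → ℝ) (z0 : ℕ) : Finset ℕ :=
  (Icc 1 m).filter fun z => z ∈ A m g r z0 ∧ z ≠ z0

def SubtreeCheap (m : ℕ) (g r : ℕ → ℝ) (w : ℕ → ℕ) : Prop :=
  ∀ z0, 1 ≤ z0 → z0 ≤ m → ∑ z ∈ strictSubtree m g r z0, (w z : ℝ) * r z < r z0

noncomputable def potential (m : ℕ) (r : ℕ → ℝ) (w : ℕ → ℕ) : ℝ :=
  cost m (fun z => z * r z) w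

noncomputable def demand {ι : Type*} (m : ℕ) (g : ℕ → ℝ) (s : ι → ℝ) (𝒥 : Finset ι) (i : ℕ) : ℝ :=
  Ssum s (𝒥.filter fun J => i ≤ mty m g s J)

section Exchange

variable {ι : Type*} {m : ℕ} {g r : ℕ → ℝ} {s : ι → ℝ} {𝒥 : Finset ι}

lemma mem_strictSubtree {z0 z : ℕ} (hz : z ∈ strictSubtree m g r z0) :
    1 ≤ z ∧ z ≤ m ∧ z < z0 ∧ r z0 / g z0 < r z / g z := by
  obtain ⟨hzI, hzA, hne⟩ := mem_filter.mp hz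
  exact ⟨(mem_Icc.mp hzI).1, (mem_Icc.mp hzI).2,
    (le_of_mem_P_s7 hzA.2.2).lt_of_ne hne, ratio_lt_of_mem_P_s7 hzA.2.2 hne⟩

lemma ratio_mul_sum_le {F : Finset ℕ} (u : ℕ → ℕ) {ρ : ℝ}
    (h : ∀ z ∈ F, 0 < g z ∧ ρ ≤ r z / g z) :
    ρ * ∑ z ∈ F, (u z : ℝ) * g z ≤ ∑ z ∈ F, (u z : ℝ) * r z := by
  rw [mul_sum]
  refine sum_le_sum fun z hz => ?_
  have := (le_div_iff₀ (h z hz).1).mp (h z hz).2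
  nlinarith [(Nat.cast_nonneg (u z) : (0 : ℝ) ≤ u z)]

lemma MachineData.mul_le_capacity (hM : MachineData m g r) (w : ℕ → ℕ) {i k : ℕ} (hi : 1 ≤ i)
    (hik : i ≤ k) (hkm : k ≤ m) : (w k : ℝ) * g k ≤ ∑ z ∈ Icc i m, (w z : ℝ) * g z :=
  Finset.single_le_sum (f := fun z => (w z : ℝ) * g z)
    (fun z hz => mul_nonneg (Nat.cast_nonneg _)
      (hM.g_pos z (hi.trans (mem_Icc.mp hz).1) (mem_Icc.mp hz).2).le)
    (mem_Icc.mpr ⟨hik, hkm⟩)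

section MoveDown

variable {w : ℕ → ℕ} {a k c n : ℕ}

/-- At the levels up to `a` the new machines have at least the capacity of the old ones,
because `r a / g a ≤ r k / g k`. -/
lemma feasible_moveDown (hM : MachineData m g r) (hw : Feasible m g s 𝒥 w) (ha1 : 1 ≤ a)
    (hak : a < k) (hkm : k ≤ m) (hn : r k = n * r a) (hc : c ≤ w k)
    (hpar : ∀ b, pstep m g r a b → k < b)
    (hmid : ∀ i, a < i → i ≤ k → demand m g s 𝒥 i ≤ ((w k : ℝ) - c) * g k) :
    Feasible m g s 𝒥 (moveDown w a k c n) := by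
  have hga := hM.g_pos a ha1 (hak.le.trans hkm)
  have hgk := hM.g_pos k (ha1.trans hak.le) hkm
  have hra := hM.r_pos a ha1 (hak.le.trans hkm)
  have hgn : g k ≤ n * g a := by
    have h := ratio_le_of_parent_gt hak hkm hpar
    rw [hn, div_le_div_iff₀ hga hgk] at h
    nlinarith
  intro i hi him
  show demand m g s 𝒥 i ≤ _
  have hcap : demand m g s 𝒥 i ≤ _ := hw i hi him
  have hwk := fun hik => hM.mul_le_capacity w hi hik hkm
  rw [sum_moveDown_mul _ _ _ hak.ne hc]
  simp only [mem_Icc]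
  split_ifs with hia hik hik
  · nlinarith [(Nat.cast_nonneg c : (0 : ℝ) ≤ c)]
  · have : (0 : ℝ) ≤ c * n * g a := by positivity
    linarith
  · have := hmid i (by omega) hik.1
    linarith [hwk hik.1]
  · linarith

lemma cost_moveDown (hak : a < k) (hkm : k ≤ m) (ha1 : 1 ≤ a) (hn : r k = n * r a)
    (hc : c ≤ w k) : cost m r (moveDown w a k c n) = cost m r w := by
  rw [cost, sum_moveDown_mul _ _ _ hak.ne hc, if_pos (mem_Icc.mpr ⟨ha1, hak.le.trans hkm⟩),
    if_pos (mem_Icc.mpr ⟨ha1.trans hak.le, hkm⟩), hn, cost]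
  ring

/-- If `a` lies strictly below some `z0`, so does `k`, and the cost moved stays in that subtree. -/
lemma sum_strictSubtree_moveDown_le (hM : MachineData m g r) (ha1 : 1 ≤ a) (hak : a < k)
    (hkm : k ≤ m) (hn : r k = n * r a) (hc : c ≤ w k) (hpar : ∀ b, pstep m g r a b → k < b)
    (z0 : ℕ) :
    ∑ z ∈ strictSubtree m g r z0, (moveDown w a k c n z : ℝ) * r z
      ≤ ∑ z ∈ strictSubtree m g r z0, (w z : ℝ) * r z := by
  rw [sum_moveDown_mul _ _ _ hak.ne hc]
  split_ifs with haF hkF hkF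
  · rw [hn]
    linarith
  · obtain ⟨-, haA, ha0⟩ := mem_filter.mp haF
    obtain ⟨hkA, hk0⟩ := mem_A_of_parent_gt haA ha0 hak hkm hpar
    exact absurd (mem_filter.mpr
      ⟨mem_Icc.mpr ⟨ha1.trans hak.le, hkm⟩, hkA, hk0⟩) hkF
  · have := hM.r_pos k (ha1.trans hak.le) hkm
    nlinarith [(Nat.cast_nonneg c : (0 : ℝ) ≤ c)]
  · linarith

lemma potential_moveDown_lt (hM : MachineData m g r) (ha1 : 1 ≤ a) (hak : a < k) (hkm : k ≤ m)
    (hn : r k = n * r a) (hc1 : 1 ≤ c) (hc : c ≤ w k) :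
    potential m r (moveDown w a k c n) < potential m r w := by
  rw [potential, cost, sum_moveDown_mul _ _ _ hak.ne hc,
    if_pos (mem_Icc.mpr ⟨ha1, hak.le.trans hkm⟩),
    if_pos (mem_Icc.mpr ⟨ha1.trans hak.le, hkm⟩), potential, cost]
  have hrk := hM.r_pos k (ha1.trans hak.le) hkm
  have hc' : (1 : ℝ) ≤ c := by exact_mod_cast hc1
  have hak' : (a : ℝ) + 1 ≤ k := by exact_mod_cast hak
  have hmove : (c * n : ℝ) * (a * r a) = c * a * r k := by rw [hn]; ring
  have hck : (1 : ℝ) ≤ c * (k - a) := by nlinarith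
  nlinarith [mul_le_mul_of_nonneg_right hck hrk.le]

end MoveDown

end Exchange

section Consolidation

variable {ι : Type*} {m : ℕ} {g r : ℕ → ℝ} {s : ι → ℝ} {𝒥 : Finset ι}

/-- By divisibility of the rates some of these machines cost exactly `r z0`; having worse
ratios, they have capacity at most `g z0`, and there are at least two of them. -/
lemma exists_consolidation (hM : MachineData m g r) {w : ℕ → ℕ} (hw : Feasible m g s 𝒥 w)
    {z0 : ℕ} (hz01 : 1 ≤ z0) (hz0m : z0 ≤ m)
    (hbig : r z0 ≤ ∑ z ∈ strictSubtree m g r z0, (w z : ℝ) * r z) :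
    ∃ w', Feasible m g s 𝒥 w' ∧ cost m r w' = cost m r w ∧
      cost m (fun _ => 1) w' < cost m (fun _ => 1) w := by
  set F := strictSubtree m g r z0
  have hF : ∀ z ∈ F, 1 ≤ z ∧ z ≤ m ∧ z < z0 ∧ r z0 / g z0 < r z / g z :=
    fun z hz => mem_strictSubtree hz
  obtain ⟨u, hu, hu0, hur⟩ :=
    hM.exists_le_sum_mul_eq (fun z hz => ⟨(hF z hz).1, (hF z hz).2.2.1⟩) hz01 hz0m w hbig
  have huz0 : u z0 = 0 := hu0 z0 fun h => (mem_filter.mp h).2.2 rfl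
  have hz0I : z0 ∈ Icc 1 m := mem_Icc.mpr ⟨hz01, hz0m⟩
  have hFI : F ⊆ Icc 1 m := filter_subset _ _
  have hsumF : ∀ h : ℕ → ℝ, ∑ z ∈ Icc 1 m, (u z : ℝ) * h z = ∑ z ∈ F, (u z : ℝ) * h z :=
    fun h => (sum_subset hFI fun z _ hz => by simp [hu0 z hz]).symm
  set w' := Function.update (w - u) z0 (w z0 + 1)
  have hsum : ∀ (G : Finset ℕ) (h : ℕ → ℝ), ∑ z ∈ G, (w' z : ℝ) * h z
      = ∑ z ∈ G, (w z : ℝ) * h z - ∑ z ∈ G, (u z : ℝ) * h z + if z0 ∈ G then h z0 else 0 := by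
    intro G h
    rw [sum_update_mul, sum_sub_mul G hu, Pi.sub_apply, huz0, Nat.sub_zero]
    push_cast
    split_ifs <;> ring
  have hrz0 := hM.r_pos z0 hz01 hz0m
  have hgz0 := hM.g_pos z0 hz01 hz0m
  have hug : ∑ z ∈ F, (u z : ℝ) * g z ≤ g z0 := by
    have h := ratio_mul_sum_le (F := F) u fun z hz =>
      ⟨hM.g_pos z (hF z hz).1 (hF z hz).2.1, (hF z hz).2.2.2.le⟩
    rw [hur, div_mul_comm, mul_le_iff_le_one_left hrz0, div_le_one (by positivity)] at h
    exact h
  have htwo : (2 : ℝ) ≤ ∑ z ∈ F, (u z : ℝ) * 1 := by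
    have h : ∑ z ∈ F, (u z : ℝ) * (2 * r z) ≤ ∑ z ∈ F, (u z : ℝ) * r z0 :=
      sum_le_sum fun z hz => mul_le_mul_of_nonneg_left
        (hM.two_mul_le (hF z hz).1 (hF z hz).2.2.1 hz0m) (Nat.cast_nonneg _)
    simp only [mul_one]
    rw [← sum_mul, sum_congr rfl fun z _ => mul_left_comm _ _ _,
      ← mul_sum, hur] at h
    nlinarith
  refine ⟨w', fun i hi him => ?_, ?_, ?_⟩
  · have hcap := hw i hi him
    rw [hsum]
    by_cases hiz : i ≤ z0
    · have : ∑ z ∈ Icc i m, (u z : ℝ) * g z ≤ ∑ z ∈ Icc 1 m, (u z : ℝ) * g z :=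
        sum_le_sum_of_subset_of_nonneg (Icc_subset_Icc_left hi) fun z hz _ =>
          mul_nonneg (Nat.cast_nonneg _) (hM.g_pos z (mem_Icc.mp hz).1 (mem_Icc.mp hz).2).le
      rw [if_pos (mem_Icc.mpr ⟨hiz, hz0m⟩)]
      linarith [hsumF g]
    · have : ∑ z ∈ Icc i m, (u z : ℝ) * g z = 0 :=
        sum_eq_zero fun z hz => by
          rw [hu0 z fun hzF => by linarith [(hF z hzF).2.2.1, (mem_Icc.mp hz).1], Nat.cast_zero,
            zero_mul]
      rw [if_neg fun h => hiz (mem_Icc.mp h).1]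
      linarith
  · rw [cost, cost, hsum, if_pos hz0I, hsumF, hur]
    ring
  · rw [cost, cost, hsum, if_pos hz0I, hsumF]
    linarith

end Consolidation

section Jobs

variable {ι : Type*} {m : ℕ} {g r : ℕ → ℝ} {s : ι → ℝ} {𝒥 : Finset ι}

lemma mty_mem_Icc (hm : 1 ≤ m) {J : ι} (hJ : s J ≤ g m) : 1 ≤ mty m g s J ∧ mty m g s J ≤ m :=
  have h := Nat.sInf_mem (⟨m, hm, le_rfl, hJ⟩ : {z | 1 ≤ z ∧ z ≤ m ∧ s J ≤ g z}.Nonempty)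
  ⟨h.1, h.2.1⟩

lemma k0f_mem_Icc (hm : 1 ≤ m) (hJ : 𝒥.Nonempty) (hs : ∀ J ∈ 𝒥, 0 < s J ∧ s J ≤ g m) :
    1 ≤ k0f m g s 𝒥 ∧ k0f m g s 𝒥 ≤ m := by
  obtain ⟨J, hJ⟩ := hJ
  exact ⟨(mty_mem_Icc hm (hs J hJ).2).1.trans (Finset.le_sup hJ),
    Finset.sup_le fun J hJ => (mty_mem_Icc hm (hs J hJ).2).2⟩

lemma demand_anti (hs : ∀ J ∈ 𝒥, 0 < s J ∧ s J ≤ g m) {i j : ℕ} (hij : i ≤ j) :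
    demand m g s 𝒥 j ≤ demand m g s 𝒥 i :=
  sum_le_sum_of_subset_of_nonneg (Finset.monotone_filter_right _ fun _ _ h => hij.trans h)
    fun J hJ _ => (hs J (mem_filter.mp hJ).1).1.le

lemma demand_eq_zero {i : ℕ} (hi : k0f m g s 𝒥 < i) : demand m g s 𝒥 i = 0 := by
  rw [demand, Finset.filter_false_of_mem fun J hJ h => (Finset.le_sup hJ).not_gt (hi.trans_le h)]
  rfl

lemma demand_k0f_pos (hJ : 𝒥.Nonempty) (hs : ∀ J ∈ 𝒥, 0 < s J ∧ s J ≤ g m) :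
    0 < demand m g s 𝒥 (k0f m g s 𝒥) := by
  obtain ⟨J, hJ, hJmax⟩ := Finset.exists_mem_eq_sup 𝒥 hJ (mty m g s)
  exact Finset.sum_pos' (fun J hJ => (hs J (mem_filter.mp hJ).1).1.le)
    ⟨J, mem_filter.mpr ⟨hJ, hJmax.le⟩, (hs J hJ).1⟩

lemma SH_eq_demand {k : ℕ} (hk1 : 1 ≤ k) (hkm : k ≤ m) (hk : k0f m g s 𝒥 ≤ k) :
    SH m g r s 𝒥 k = demand m g s 𝒥 (v m g r k) := by
  refine congrArg (Ssum s) (Finset.filter_congr fun J hJ => ?_)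
  rw [mem_A_iff hk1 hkm]
  exact ⟨fun h => h.1, fun h => ⟨h, (Finset.le_sup hJ).trans hk⟩⟩

noncomputable def ktop (m : ℕ) (w : ℕ → ℕ) : ℕ := sSup {z | 1 ≤ z ∧ z ≤ m ∧ 0 < w z}

lemma le_ktop {w : ℕ → ℕ} {z : ℕ} (hz1 : 1 ≤ z) (hzm : z ≤ m) (hw : 0 < w z) : z ≤ ktop m w :=
  le_csSup ⟨m, fun _ h => h.2.1⟩ ⟨hz1, hzm, hw⟩

lemma ktop_spec (hm : 1 ≤ m) (hJ : 𝒥.Nonempty) (hs : ∀ J ∈ 𝒥, 0 < s J ∧ s J ≤ g m)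
    {w : ℕ → ℕ} (hw : Feasible m g s 𝒥 w) :
    1 ≤ ktop m w ∧ ktop m w ≤ m ∧ 0 < w (ktop m w) ∧ k0f m g s 𝒥 ≤ ktop m w := by
  obtain ⟨hk1, hkm⟩ := k0f_mem_Icc hm hJ hs
  have hcap : demand m g s 𝒥 (k0f m g s 𝒥) ≤ _ := hw _ hk1 hkm
  obtain ⟨z, hz, hwz⟩ : ∃ z ∈ Icc (k0f m g s 𝒥) m, w z ≠ 0 := by
    by_contra! h
    rw [sum_eq_zero fun z hz => by rw [h z hz, Nat.cast_zero, zero_mul]] at hcap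
    exact (demand_k0f_pos hJ hs).not_ge hcap
  obtain ⟨hkz, hzm⟩ := mem_Icc.mp hz
  have hmem : ktop m w ∈ {z | 1 ≤ z ∧ z ≤ m ∧ 0 < w z} :=
    Nat.sSup_mem ⟨z, hk1.trans hkz, hzm, Nat.pos_of_ne_zero hwz⟩ ⟨m, fun _ h => h.2.1⟩
  exact ⟨hmem.1, hmem.2.1, hmem.2.2,
    hkz.trans (le_ktop (hk1.trans hkz) hzm (Nat.pos_of_ne_zero hwz))⟩

end Jobs

lemma exists_isMinOn_of_nat_mul {α : Type*} {S : Set α} (hS : S.Nonempty) (f : α → ℝ) {q : ℝ}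
    (hq : 0 ≤ q) (hf : ∀ x ∈ S, ∃ n : ℕ, f x = n * q) : ∃ x ∈ S, IsMinOn f S x := by
  choose! n hn using hf
  have hx := Function.argminOn_mem n S hS
  refine ⟨_, hx, fun y hy => ?_⟩
  show f _ ≤ f y
  rw [hn _ hx, hn y hy]
  exact mul_le_mul_of_nonneg_right (by exact_mod_cast Function.argminOn_le n S hy) hq

def IsOptimal {ι : Type*} (m : ℕ) (g r : ℕ → ℝ) (s : ι → ℝ) (𝒥 : Finset ι) (w : ℕ → ℕ) : Prop :=
  Feasible m g s 𝒥 w ∧ ∀ w', Feasible m g s 𝒥 w' → cost m r w ≤ cost m r w'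

def cheapOptimal {ι : Type*} (m : ℕ) (g r : ℕ → ℝ) (s : ι → ℝ) (𝒥 : Finset ι) :
    Set (ℕ → ℕ) :=
  {w | IsOptimal m g r s 𝒥 w ∧ SubtreeCheap m g r w}

section Optimal

variable {ι : Type*} {m : ℕ} {g r : ℕ → ℝ} {s : ι → ℝ} {𝒥 : Finset ι}

lemma exists_feasible (hgm : 0 < g m) (hs : ∀ J ∈ 𝒥, 0 < s J ∧ s J ≤ g m) :
    ∃ w, Feasible m g s 𝒥 w := by
  refine ⟨Function.update 0 m ⌈Ssum s 𝒥 / g m⌉₊, fun i hi him => ?_⟩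
  rw [sum_update_mul, if_pos (mem_Icc.mpr ⟨him, le_rfl⟩)]
  simp only [Pi.zero_apply, Nat.cast_zero, zero_mul, Finset.sum_const_zero, sub_zero, zero_add]
  calc Ssum s (𝒥.filter fun J => i ≤ mty m g s J) ≤ Ssum s 𝒥 :=
        sum_le_sum_of_subset_of_nonneg (filter_subset _ _)
          fun J hJ _ => (hs J hJ).1.le
    _ ≤ _ := (div_le_iff₀ hgm).mp (Nat.le_ceil _)

lemma exists_isOptimal (hM : MachineData m g r) (hm : 1 ≤ m)
    (hs : ∀ J ∈ 𝒥, 0 < s J ∧ s J ≤ g m) : ∃ w, IsOptimal m g r s 𝒥 w := by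
  obtain ⟨w, hw, hmin⟩ := exists_isMinOn_of_nat_mul (exists_feasible (hM.g_pos m hm le_rfl) hs)
    (cost m r) (hM.r_pos 1 le_rfl hm).le fun w _ => hM.exists_cost_eq_nat_mul w
  exact ⟨w, hw, fun w' hw' => hmin hw'⟩

/-- Otherwise a consolidation would save a machine at no cost. -/
lemma subtreeCheap_of_isMinOn (hM : MachineData m g r) {w : ℕ → ℕ} (hw : IsOptimal m g r s 𝒥 w)
    (hmin : IsMinOn (cost m fun _ => 1) {w | IsOptimal m g r s 𝒥 w} w) :
    SubtreeCheap m g r w := by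
  intro z0 hz01 hz0m
  by_contra! hbig
  obtain ⟨w', hw', hcost, hcount⟩ := exists_consolidation hM hw.1 hz01 hz0m hbig
  exact (hmin ⟨hw', fun w'' hw'' => hcost ▸ hw.2 w'' hw''⟩).not_gt hcount

lemma exists_isMinOn_potential (hM : MachineData m g r) (hm : 1 ≤ m)
    (hs : ∀ J ∈ 𝒥, 0 < s J ∧ s J ≤ g m) :
    ∃ w ∈ cheapOptimal m g r s 𝒥, IsMinOn (potential m r) (cheapOptimal m g r s 𝒥) w := by
  obtain ⟨w, hw, hmin⟩ := exists_isMinOn_of_nat_mul (exists_isOptimal hM hm hs)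
    (cost m fun _ => 1) zero_le_one fun w _ => ⟨∑ z ∈ Icc 1 m, w z, by simp [cost]⟩
  have hne : (cheapOptimal m g r s 𝒥).Nonempty := ⟨w, hw, subtreeCheap_of_isMinOn hM hw hmin⟩
  refine exists_isMinOn_of_nat_mul hne _
    (hM.r_pos 1 le_rfl hm).le fun w _ => ?_
  obtain ⟨n, hn⟩ := hM.exists_cost_eq_nat_mul fun z => z * w z
  refine ⟨n, ?_⟩
  rw [← hn, potential, cost, cost]
  push_cast
  exact sum_congr rfl fun z _ => by ring

end Optimal

section Properties

variable {ι : Type*} {m : ℕ} {g r : ℕ → ℝ} {s : ι → ℝ} {𝒥 : Finset ι}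

lemma not_isMinOn_potential_of_moveDown (hM : MachineData m g r) {w : ℕ → ℕ}
    (hw : w ∈ cheapOptimal m g r s 𝒥) {a k c n : ℕ} (ha1 : 1 ≤ a) (hak : a < k) (hkm : k ≤ m)
    (hn : r k = n * r a) (hc1 : 1 ≤ c) (hc : c ≤ w k) (hpar : ∀ b, pstep m g r a b → k < b)
    (hmid : ∀ i, a < i → i ≤ k → demand m g s 𝒥 i ≤ ((w k : ℝ) - c) * g k) :
    ¬ IsMinOn (potential m r) (cheapOptimal m g r s 𝒥) w := by
  intro hmin
  have hmove : moveDown w a k c n ∈ cheapOptimal m g r s 𝒥 :=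
    ⟨⟨feasible_moveDown hM hw.1.1 ha1 hak hkm hn hc hpar hmid,
        fun w' hw' => (cost_moveDown hak hkm ha1 hn hc).trans_le (hw.1.2 w' hw')⟩,
      fun z0 hz01 hz0m =>
        (sum_strictSubtree_moveDown_le hM ha1 hak hkm hn hc hpar z0).trans_lt (hw.2 z0 hz01 hz0m)⟩
  exact (hmin hmove).not_gt (potential_moveDown_lt hM ha1 hak hkm hn hc1 hc)

/-- Otherwise all machines of type `ktop` move down to the highest ancestor `a` of `k0` below
`ktop`: the parent of `a` lies above `ktop`, and no job needs a type in `(a, ktop]`. -/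
lemma ktop_mem_P (hM : MachineData m g r) (hm : 1 ≤ m) (hJ : 𝒥.Nonempty)
    (hs : ∀ J ∈ 𝒥, 0 < s J ∧ s J ≤ g m) {w : ℕ → ℕ} (hw : w ∈ cheapOptimal m g r s 𝒥)
    (hmin : IsMinOn (potential m r) (cheapOptimal m g r s 𝒥) w) :
    ktop m w ∈ P m g r (k0f m g s 𝒥) := by
  obtain ⟨-, hkm, hwk, hk0k⟩ := ktop_spec hm hJ hs hw.1.1
  set k := ktop m w
  set k0 := k0f m g s 𝒥
  by_contra hkP
  have hbdd : BddAbove {t | t ∈ P m g r k0 ∧ t < k} := ⟨k, fun _ ht => ht.2.le⟩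
  obtain ⟨haP, hak⟩ : sSup {t | t ∈ P m g r k0 ∧ t < k} ∈ {t | t ∈ P m g r k0 ∧ t < k} :=
    Nat.sSup_mem ⟨k0, Relation.ReflTransGen.refl,
      hk0k.lt_of_ne fun h => hkP (h ▸ Relation.ReflTransGen.refl)⟩ hbdd
  set a := sSup {t | t ∈ P m g r k0 ∧ t < k}
  have hk0a : k0 ≤ a := le_of_mem_P_s7 haP
  have ha1 : 1 ≤ a := (k0f_mem_Icc hm hJ hs).1.trans hk0a
  have hpar : ∀ b, pstep m g r a b → k < b := by
    intro b hb
    have hbP : b ∈ P m g r k0 := haP.tail hb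
    refine lt_of_le_of_ne (not_lt.mp fun hbk => ?_) fun h => hkP (h ▸ hbP)
    exact (pstep_mem_pset hb).2.1.not_ge (le_csSup hbdd ⟨hbP, hbk⟩)
  obtain ⟨n, hn⟩ := hM.r_dvd a k ha1 hak.le hkm
  refine not_isMinOn_potential_of_moveDown hM hw ha1 hak hkm hn hwk le_rfl hpar
    (fun i hai _ => ?_) hmin
  rw [demand_eq_zero (hk0a.trans_lt hai), sub_self, zero_mul]

lemma strictSubtree_eq {k : ℕ} (hk1 : 1 ≤ k) (hkm : k ≤ m) :
    strictSubtree m g r k = (Icc (v m g r k) k).erase k := by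
  have hv1 := (v_mem_A (g := g) (r := r) hk1 hkm).1
  ext z
  simp only [strictSubtree, mem_filter, mem_Icc, mem_erase, mem_A_iff hk1 hkm]
  omega

lemma floor_le_ktop (hM : MachineData m g r) (hm : 1 ≤ m) (hJ : 𝒥.Nonempty)
    (hs : ∀ J ∈ 𝒥, 0 < s J ∧ s J ≤ g m) {w : ℕ → ℕ} (hw : Feasible m g s 𝒥 w)
    (hcheap : SubtreeCheap m g r w) :
    ⌊SH m g r s 𝒥 (ktop m w) / g (ktop m w)⌋₊ ≤ w (ktop m w) := by
  obtain ⟨hk1, hkm, -, hk0k⟩ := ktop_spec hm hJ hs hw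
  set k := ktop m w
  have hv := v_mem_A (g := g) (r := r) hk1 hkm
  have hvk : v m g r k ≤ k := le_of_mem_P_s7 hv.2.2
  have hgk := hM.g_pos k hk1 hkm
  have hSH : 0 ≤ SH m g r s 𝒥 k :=
    Finset.sum_nonneg fun J hJ => (hs J (mem_filter.mp hJ).1).1.le
  have hcap : SH m g r s 𝒥 k ≤ (w k : ℝ) * g k + ∑ z ∈ strictSubtree m g r k, (w z : ℝ) * g z := by
    rw [SH_eq_demand hk1 hkm hk0k, strictSubtree_eq hk1 hkm,
      add_sum_erase _ (fun z => (w z : ℝ) * g z) (mem_Icc.mpr ⟨hvk, le_rfl⟩),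
      sum_subset (Icc_subset_Icc_right hkm) fun z hz hzk => ?_]
    · exact hw _ hv.1 (hvk.trans hkm)
    · obtain ⟨-, hzm⟩ := mem_Icc.mp hz
      have hkz : k < z := by simp_all
      rw [Nat.eq_zero_of_not_pos fun hwz => hkz.not_ge (le_ktop (hk1.trans hkz.le) hzm hwz),
        Nat.cast_zero, zero_mul]
  by_contra! hlt
  have hfloor : ((w k : ℝ) + 1) * g k ≤ SH m g r s 𝒥 k := by
    rw [← le_div_iff₀ hgk]
    exact (by exact_mod_cast hlt : (w k : ℝ) + 1 ≤ ⌊SH m g r s 𝒥 k / g k⌋₊).trans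
      (Nat.floor_le (div_nonneg hSH hgk.le))
  have hsub := ratio_mul_sum_le (F := strictSubtree m g r k) w fun z hz =>
    have hz := mem_strictSubtree hz
    ⟨hM.g_pos z hz.1 hz.2.1, hz.2.2.2.le⟩
  have hρ : r k / g k * g k = r k := div_mul_cancel₀ _ hgk.ne'
  have := hcheap k hk1 hkm
  nlinarith [div_pos (hM.r_pos k hk1 hkm) hgk]

lemma feasible_update_pred (hM : MachineData m g r) {w : ℕ → ℕ} (hw : Feasible m g s 𝒥 w)
    {k : ℕ} (hkm : k ≤ m) (hwk : 1 ≤ w k)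
    (hdem : ∀ i, 1 ≤ i → i ≤ k → demand m g s 𝒥 i ≤ ((w k : ℝ) - 1) * g k) :
    Feasible m g s 𝒥 (Function.update w k (w k - 1)) := by
  intro i hi him
  show demand m g s 𝒥 i ≤ _
  have hcap : demand m g s 𝒥 i ≤ _ := hw i hi him
  rw [sum_update_mul, Nat.cast_sub hwk, Nat.cast_one]
  split_ifs with hik
  · linarith [hdem i hi (mem_Icc.mp hik).1,
      hM.mul_le_capacity w hi (mem_Icc.mp hik).1 hkm]
  · linarith

/-- Surplus machines of type `ktop` beyond `⌈S(H_ktop) / g ktop⌉` serve no job, since all jobs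
lie in the subtree `[v ktop, ktop]`. If `v ktop = 1` one of them can be dropped; otherwise it
moves down to `v ktop - 1`, whose parent lies above `ktop`. -/
lemma ktop_le_ceil (hM : MachineData m g r) (hm : 1 ≤ m) (hJ : 𝒥.Nonempty)
    (hs : ∀ J ∈ 𝒥, 0 < s J ∧ s J ≤ g m) {w : ℕ → ℕ} (hw : w ∈ cheapOptimal m g r s 𝒥)
    (hmin : IsMinOn (potential m r) (cheapOptimal m g r s 𝒥) w) :
    w (ktop m w) ≤ ⌈SH m g r s 𝒥 (ktop m w) / g (ktop m w)⌉₊ := by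
  obtain ⟨hk1, hkm, hwk, hk0k⟩ := ktop_spec hm hJ hs hw.1.1
  set k := ktop m w
  have hv := v_mem_A (g := g) (r := r) hk1 hkm
  have hgk := hM.g_pos k hk1 hkm
  by_contra! hlt
  have hSH : SH m g r s 𝒥 k ≤ ((w k : ℝ) - 1) * g k := by
    rw [← div_le_iff₀ hgk]
    exact (Nat.le_ceil _).trans (by
      have : (⌈SH m g r s 𝒥 k / g k⌉₊ : ℝ) + 1 ≤ w k := by exact_mod_cast hlt
      linarith)
  have hdem : ∀ i, v m g r k ≤ i → demand m g s 𝒥 i ≤ ((w k : ℝ) - 1) * g k := fun i hi =>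
    (demand_anti hs hi).trans (SH_eq_demand hk1 hkm hk0k ▸ hSH)
  rcases hv.1.eq_or_lt with hv1 | hv1
  · have hdrop := feasible_update_pred hM hw.1.1 hkm hwk fun i hi _ => hdem i (hv1 ▸ hi)
    have hcost := hw.1.2 _ hdrop
    rw [cost, cost, sum_update_mul, if_pos (mem_Icc.mpr ⟨hk1, hkm⟩), Nat.cast_pred hwk]
      at hcost
    linarith [hM.r_pos k hk1 hkm]
  set a := v m g r k - 1
  have ha1 : 1 ≤ a := by omega
  have hak : a < k := by have := le_of_mem_P_s7 hv.2.2; omega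
  have hpar : ∀ b, pstep m g r a b → k < b := by
    intro b hb
    by_contra! hbk
    have hab := (pstep_mem_pset hb).2.1
    have hbA : b ∈ A m g r k := (mem_A_iff hk1 hkm).mpr ⟨by omega, hbk⟩
    have haA : a ∈ A m g r k := ⟨ha1, hak.le.trans hkm, Relation.ReflTransGen.head hb hbA.2.2⟩
    have := ((mem_A_iff hk1 hkm).mp haA).1
    omega
  obtain ⟨n, hn⟩ := hM.r_dvd a k ha1 hak.le hkm
  refine not_isMinOn_potential_of_moveDown hM hw ha1 hak hkm hn le_rfl hwk hpar
    (fun i hai _ => ?_) hmin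
  rw [Nat.cast_one]
  exact hdem i (by omega)

end Properties

theorem statement_7_general {ι : Type*} (m : ℕ) (g r : ℕ → ℝ) (s : ι → ℝ) (𝒥 : Finset ι)
    (hm : 1 ≤ m)
    (hg1 : 0 < g 1)
    (hg : ∀ i j, 1 ≤ i → i < j → j ≤ m → g i < g j)
    (hr : ∀ i j, 1 ≤ i → i < j → j ≤ m → r i < r j)
    (hr8 : ∀ z, 1 ≤ z → z ≤ m → ∃ n : ℤ, r z = (8 : ℝ) ^ n)
    (hJ : 𝒥.Nonempty)
    (hs : ∀ J ∈ 𝒥, 0 < s J ∧ s J ≤ g m) :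
    ∃ w : ℕ → ℕ, Feasible m g s 𝒥 w ∧
      (∀ w' : ℕ → ℕ, Feasible m g s 𝒥 w' → cost m r w ≤ cost m r w') ∧
      (sSup {z | 1 ≤ z ∧ z ≤ m ∧ 0 < w z} ∈ P m g r (k0f m g s 𝒥)) ∧
      (∀ z0, 1 ≤ z0 → z0 ≤ m →
        (∑ z ∈ (Finset.Icc 1 m).filter (fun z => z ∈ A m g r z0 ∧ z ≠ z0),
            (w z : ℝ) * r z) < r z0) ∧
      (⌊SH m g r s 𝒥 (sSup {z | 1 ≤ z ∧ z ≤ m ∧ 0 < w z})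
          / g (sSup {z | 1 ≤ z ∧ z ≤ m ∧ 0 < w z})⌋₊
        ≤ w (sSup {z | 1 ≤ z ∧ z ≤ m ∧ 0 < w z}) ∧
       w (sSup {z | 1 ≤ z ∧ z ≤ m ∧ 0 < w z})
        ≤ ⌈SH m g r s 𝒥 (sSup {z | 1 ≤ z ∧ z ≤ m ∧ 0 < w z})
          / g (sSup {z | 1 ≤ z ∧ z ≤ m ∧ 0 < w z})⌉₊) := by
  have hM : MachineData m g r := .of_pow_eight hg1 hg hr hr8
  obtain ⟨w, hw, hmin⟩ := exists_isMinOn_potential hM hm hs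
  exact ⟨w, hw.1.1, hw.1.2, ktop_mem_P hM hm hJ hs hw hmin, hw.2,
    floor_le_ktop hM hm hJ hs hw.1.1 hw.2, ktop_le_ceil hM hm hJ hs hw hmin⟩

/-- There exists a feasible machine configuration `w*` of minimum
cost such that: (1) `k_opt := max{z ∈ M : w* z > 0} ∈ P(k0)`;
(2) for every `z0 ∈ M`, `∑_{z ∈ A(z0)\{z0}} w* z · r z < r z0`; and
(3) `⌊S(H_{k_opt})/g k_opt⌋ ≤ w* k_opt ≤ ⌈S(H_{k_opt})/g k_opt⌉`. -/
theorem statement_7 {ι : Type*} (m : ℕ) (g r : ℕ → ℝ) (s : ι → ℝ) (𝒥 : Finset ι)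
    (hm : 1 ≤ m)
    (hg1 : 0 < g 1) (hr1 : 0 < r 1)
    (hg : ∀ i j, 1 ≤ i → i < j → j ≤ m → g i < g j)
    (hr : ∀ i j, 1 ≤ i → i < j → j ≤ m → r i < r j)
    (hr8 : ∀ z, 1 ≤ z → z ≤ m → ∃ n : ℤ, r z = (8 : ℝ) ^ n)
    (hJ : 𝒥.Nonempty)
    (hs : ∀ J ∈ 𝒥, 0 < s J ∧ s J ≤ g m) :
    ∃ w : ℕ → ℕ, Feasible m g s 𝒥 w ∧
      (∀ w' : ℕ → ℕ, Feasible m g s 𝒥 w' → cost m r w ≤ cost m r w') ∧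
      (sSup {z | 1 ≤ z ∧ z ≤ m ∧ 0 < w z} ∈ P m g r (k0f m g s 𝒥)) ∧
      (∀ z0, 1 ≤ z0 → z0 ≤ m →
        (∑ z ∈ (Finset.Icc 1 m).filter (fun z => z ∈ A m g r z0 ∧ z ≠ z0),
            (w z : ℝ) * r z) < r z0) ∧
      (⌊SH m g r s 𝒥 (sSup {z | 1 ≤ z ∧ z ≤ m ∧ 0 < w z})
          / g (sSup {z | 1 ≤ z ∧ z ≤ m ∧ 0 < w z})⌋₊
        ≤ w (sSup {z | 1 ≤ z ∧ z ≤ m ∧ 0 < w z}) ∧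
       w (sSup {z | 1 ≤ z ∧ z ≤ m ∧ 0 < w z})
        ≤ ⌈SH m g r s 𝒥 (sSup {z | 1 ≤ z ∧ z ≤ m ∧ 0 < w z})
          / g (sSup {z | 1 ≤ z ∧ z ≤ m ∧ 0 < w z})⌉₊) :=
  statement_7_general m g r s 𝒥 hm hg1 hg hr hr8 hJ hs

end BSHM
end
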